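/- For N ≥ 1 and θ_j = πj/N for j = 0, 1, …, N−1, the projector onto the N-qubit GHZ state decomposes as |GHZ⟩⟨GHZ| = (1/2)(|0⟩⟨0|^{⊗N} + |1⟩⟨1|^{⊗N}) + (1/(2N)) ∑_{j=0}^{N−1} (−1)^j M_{θ_j}^{⊗N}. -/

import Mathlib

open Matrix

/-- Pauli matrix σ_x. -/
def sigmaX : Matrix (Fin 2) (Fin 2) ℂ := !![0, 1; 1, 0]

/-- Pauli matrix σ_y. -/
def sigmaY : Matrix (Fin 2) (Fin 2) ℂ := !![0, -Complex.I; Complex.I, 0]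

/-- M_θ = cos θ · σ_x + sin θ · σ_y. -/
noncomputable def Mtheta (θ : ℝ) : Matrix (Fin 2) (Fin 2) ℂ :=
  (Real.cos θ : ℂ) • sigmaX + (Real.sin θ : ℂ) • sigmaY

/-- The N-fold tensor power of `M_θ`. -/
noncomputable def MthetaPow (θ : ℝ) (N : ℕ) : Matrix (Fin N → Fin 2) (Fin N → Fin 2) ℂ :=
  Matrix.of fun b c => ∏ i, Mtheta θ (b i) (c i)

/-- The N-qubit GHZ state `(|0⟩^{⊗N} + |1⟩^{⊗N})/√2`. -/
noncomputable def ghz (N : ℕ) : (Fin N → Fin 2) → ℂ :=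
  fun b => if b = (fun _ => 0) ∨ b = (fun _ => 1) then ((1 / Real.sqrt 2 : ℝ) : ℂ) else 0

lemma Mtheta_apply (θ : ℝ) (a b : Fin 2) :
    Mtheta θ a b = if a = b then 0 else Complex.exp (((2 * (a : ℕ) : ℂ) - 1) * θ * Complex.I) := by
  fin_cases a <;> fin_cases b <;>
    simp [Mtheta, sigmaX, sigmaY, Complex.ext_iff, Complex.exp_re, Complex.exp_im,
      Real.exp_zero, Complex.cos_ofReal_re, Complex.sin_ofReal_re] <;> ring_nf <;> simp


lemma MthetaPow_apply (θ : ℝ) (N : ℕ) (b c : Fin N → Fin 2) :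
    MthetaPow θ N b c =
      if ∀ i, b i ≠ c i then
        Complex.exp ((∑ i, ((2 * (b i : ℕ) : ℂ) - 1)) * θ * Complex.I) else 0 := by
  unfold MthetaPow
  by_cases h : ∀ i, b i ≠ c i
  · rw [if_pos h]
    simp only [Matrix.of_apply, Finset.sum_mul]
    rw [show Complex.exp (∑ i, (((2 * (b i : ℕ) : ℂ) - 1) * θ * Complex.I)) =
        ∏ i, Complex.exp (((2 * (b i : ℕ) : ℂ) - 1) * θ * Complex.I) from
      Complex.exp_sum Finset.univ _]
    exact Fintype.prod_congr _ _ fun i => by rw [Mtheta_apply, if_neg (h i)]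
  · push_neg at h
    obtain ⟨i, hi⟩ := h
    rw [if_neg (by push_neg; exact ⟨i, hi⟩), Matrix.of_apply]
    exact Finset.prod_eq_zero (Finset.mem_univ i) (by rw [Mtheta_apply, if_pos hi])

lemma geom_aux (N : ℕ) (ω : ℂ) (hω : ω ^ N = 1) :
    ∑ j ∈ Finset.range N, ω ^ j = if ω = 1 then (N : ℂ) else 0 := by
  split_ifs with h
  · simp [h]
  · rw [geom_sum_eq h, hω]; simp

lemma sum_aux (N k : ℕ) (hN : 1 ≤ N) (hk : k ≤ N) :
    ∑ j ∈ Finset.range N,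
        (-1 : ℂ) ^ j *
          Complex.exp ((2 * (k : ℂ) - N) * ((Real.pi * j / N : ℝ) : ℂ) * Complex.I) =
      if k = 0 ∨ k = N then (N : ℂ) else 0 := by
  have hN0 : (N : ℂ) ≠ 0 := Nat.cast_ne_zero.2 (by omega)
  set ω : ℂ := Complex.exp (2 * Real.pi * Complex.I * k / N) with hωdef
  have hterm : ∀ j : ℕ,
      (-1 : ℂ) ^ j *
          Complex.exp ((2 * (k : ℂ) - N) * ((Real.pi * j / N : ℝ) : ℂ) * Complex.I) = ω ^ j := by
    intro j
    rw [← Complex.exp_pi_mul_I, ← Complex.exp_nat_mul, ← Complex.exp_add, hωdef,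
      ← Complex.exp_nat_mul]
    congr 1
    push_cast
    field_simp
    ring
  rw [Finset.sum_congr rfl fun j _ => hterm j]
  have hωN : ω ^ N = 1 := by
    rw [hωdef, ← Complex.exp_nat_mul,
      show (N : ℂ) * (2 * Real.pi * Complex.I * k / N) = (k : ℂ) * (2 * Real.pi * Complex.I) by
        field_simp]
    exact_mod_cast Complex.exp_int_mul_two_pi_mul_I k
  have hω1 : ω = 1 ↔ (k = 0 ∨ k = N) := by
    have hprim := Complex.isPrimitiveRoot_exp N (by omega)
    have hpow : ω = Complex.exp (2 * Real.pi * Complex.I / N) ^ k := by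
      rw [← Complex.exp_nat_mul, hωdef]; congr 1; ring
    rw [hpow, hprim.pow_eq_one_iff_dvd]
    constructor
    · intro h
      rcases Nat.eq_zero_or_pos k with h0 | h0
      · exact Or.inl h0
      · exact Or.inr (le_antisymm hk (Nat.le_of_dvd h0 h))
    · rintro (rfl | rfl)
      · exact dvd_zero N
      · exact dvd_refl _
  rw [geom_aux N ω hωN]
  simp only [hω1]

/-- `|GHZ⟩⟨GHZ| = (1/2)(|0⟩⟨0|^{⊗N} + |1⟩⟨1|^{⊗N}) + (1/(2N)) ∑_{j=0}^{N−1} (−1)^j M_{θ_j}^{⊗N}`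
with `θ_j = πj/N`. -/
theorem stmt8 (N : ℕ) (hN : 1 ≤ N) :
    Matrix.vecMulVec (ghz N) (star (ghz N)) =
      (1 / 2 : ℂ) • (Matrix.single (fun _ => 0) (fun _ => 0) (1 : ℂ) +
          Matrix.single (fun _ => 1) (fun _ => 1) (1 : ℂ)) +
        (1 / (2 * N) : ℂ) •
          ∑ j ∈ Finset.range N, (-1 : ℂ) ^ j • MthetaPow (Real.pi * j / N) N := by
  have hN0 : (N : ℂ) ≠ 0 := Nat.cast_ne_zero.2 (by omega)
  have h01 : (fun _ : Fin N => (0 : Fin 2)) ≠ (fun _ => 1) := fun h => by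
    simpa using congrFun h ⟨0, hN⟩
  have hval : ((1 / Real.sqrt 2 : ℝ) : ℂ) * star ((1 / Real.sqrt 2 : ℝ) : ℂ) = 1 / 2 := by
    rw [Complex.star_def, Complex.conj_ofReal, ← Complex.ofReal_mul,
      show (1 / Real.sqrt 2) * (1 / Real.sqrt 2) = 1 / 2 by
        rw [div_mul_div_comm, one_mul, Real.mul_self_sqrt (by norm_num)]]
    norm_num
  ext b c
  simp only [Matrix.vecMulVec_apply, Pi.star_apply, Matrix.add_apply, Matrix.smul_apply,
    Matrix.sum_apply, smul_eq_mul, Matrix.single, Matrix.of_apply, MthetaPow_apply]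
  by_cases hbc : ∀ i, b i ≠ c i
  · -- c is the bitwise complement of b
    have hstd0 : ¬((fun _ : Fin N => (0 : Fin 2)) = b ∧ (fun _ : Fin N => (0 : Fin 2)) = c) := by
      rintro ⟨rfl, rfl⟩; exact hbc ⟨0, hN⟩ rfl
    have hstd1 : ¬((fun _ : Fin N => (1 : Fin 2)) = b ∧ (fun _ : Fin N => (1 : Fin 2)) = c) := by
      rintro ⟨rfl, rfl⟩; exact hbc ⟨0, hN⟩ rfl
    set k := ∑ i, ((b i : ℕ)) with hkdef
    have hkN : k ≤ N := by
      calc k ≤ ∑ _i : Fin N, 1 := Finset.sum_le_sum fun i _ => Fin.is_le (b i)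
      _ = N := by simp
    have hT : (∑ i, ((2 * (b i : ℕ) : ℂ) - 1)) = 2 * (k : ℂ) - N := by
      rw [Finset.sum_sub_distrib, ← Finset.mul_sum, hkdef]
      push_cast
      simp
    simp only [if_pos hbc, hT, if_neg hstd0, if_neg hstd1]
    rw [sum_aux N k hN hkN]
    by_cases hk0 : k = 0 ∨ k = N
    · rw [if_pos hk0]
      have hb : b = (fun _ => 0) ∨ b = (fun _ => 1) := by
        rcases hk0 with h0 | h0
        · left
          funext i
          have := (Finset.sum_eq_zero_iff.1 h0) i (Finset.mem_univ i)
          exact (show ∀ a : Fin 2, (a : ℕ) = 0 → a = 0 by decide) _ this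
        · right
          funext i
          have hsum : ∑ i, ((b i : ℕ)) = ∑ _i : Fin N, 1 := by simp [← hkdef, h0]
          have := ((Finset.sum_eq_sum_iff_of_le fun i _ => Fin.is_le (b i)).1 hsum) i
            (Finset.mem_univ i)
          exact (show ∀ a : Fin 2, (a : ℕ) = 1 → a = 1 by decide) _ this
      have hc : c = (fun _ => 0) ∨ c = (fun _ => 1) := by
        rcases hb with rfl | rfl
        · right
          funext i
          exact (show ∀ a : Fin 2, a ≠ 0 → a = 1 by decide) _ (fun h => hbc i h.symm)
        · left
          funext i
          exact (show ∀ a : Fin 2, a ≠ 1 → a = 0 by decide) _ (fun h => hbc i h.symm)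
      rw [ghz, ghz, if_pos hb, if_pos hc, hval]
      field_simp
      norm_num
    · rw [if_neg hk0, mul_zero, add_zero]
      have hb0 : b ≠ (fun _ => 0) := by
        rintro rfl
        exact hk0 (Or.inl (by simp [hkdef]))
      have hb1 : b ≠ (fun _ => 1) := by
        rintro rfl
        exact hk0 (Or.inr (by simp [hkdef]))
      rw [ghz, if_neg (not_or.2 ⟨hb0, hb1⟩), zero_mul]
      simp
  · simp only [if_neg hbc, mul_zero, Finset.sum_const_zero, mul_zero, add_zero]
    push_neg at hbc
    obtain ⟨i, hi⟩ := hbc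
    by_cases hb : b = (fun _ => 0) ∨ b = (fun _ => 1)
    · by_cases hc : c = (fun _ => 0) ∨ c = (fun _ => 1)
      · have hbceq : b = c := by
          rcases hb with rfl | rfl <;> rcases hc with rfl | rfl <;>
            first
              | rfl
              | (exfalso; exact (by decide : ¬ ((0 : Fin 2) = 1)) hi)
              | (exfalso; exact (by decide : ¬ ((1 : Fin 2) = 0)) hi)
        subst hbceq
        rw [ghz, if_pos hb, hval]
        rcases hb with rfl | rfl
        · rw [if_pos ⟨rfl, rfl⟩, if_neg (by rintro ⟨h, -⟩; exact h01 h.symm)]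
          ring
        · rw [if_neg (by rintro ⟨h, -⟩; exact h01 h), if_pos ⟨rfl, rfl⟩]
          ring
      · rw [show ghz N c = 0 from if_neg hc, star_zero, mul_zero]
        have h1 : ¬((fun _ : Fin N => (0 : Fin 2)) = b ∧ (fun _ : Fin N => (0 : Fin 2)) = c) := by
          rintro ⟨-, rfl⟩; exact hc (Or.inl rfl)
        have h2 : ¬((fun _ : Fin N => (1 : Fin 2)) = b ∧ (fun _ : Fin N => (1 : Fin 2)) = c) := by
          rintro ⟨-, rfl⟩; exact hc (Or.inr rfl)
        rw [if_neg h1, if_neg h2]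
        ring
    · rw [show ghz N b = 0 from if_neg hb, zero_mul]
      have h1 : ¬((fun _ : Fin N => (0 : Fin 2)) = b ∧ (fun _ : Fin N => (0 : Fin 2)) = c) := by
        rintro ⟨rfl, -⟩; exact hb (Or.inl rfl)
      have h2 : ¬((fun _ : Fin N => (1 : Fin 2)) = b ∧ (fun _ : Fin N => (1 : Fin 2)) = c) := by
        rintro ⟨rfl, -⟩; exact hb (Or.inr rfl)
      rw [if_neg h1, if_neg h2]
      ring
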